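/- Let A, B, C, D be a parallelogram in ℝ² (D = A + C − B) with κ, ν > 0, K = (B + κC)/(1+κ), N = (A + νB)/(1+ν). The lines AK and DN intersect in the unique point Z, and relative to the barycentric reference (C, A, B) (i.e., coordinates (t₁,t₂,t₃) representing t₁C + t₂A + t₃B with t₁+t₂+t₃=1 after normalization), Z has homogeneous coordinates (κ, (1 + κ + κν)/ν, 1). -/

import Mathlib

def detv (u v : ℝ × ℝ) : ℝ := u.1 * v.2 - u.2 * v.1

def lineTh (P Q : ℝ × ℝ) : Set (ℝ × ℝ) := {X | ∃ t : ℝ, X = P + t • (Q - P)}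

/-!
The point `Z` is exhibited on both lines by explicit parameters, found by writing `Z`, `K - A`
and `N - D` in the frame `A; B - A, C - A`. Uniqueness holds because the directions `K - A` and
`N - D` are independent: by bilinearity of the determinant,
`detv (K - A) (N - D) = -(1 + κ + ν + 2κν) / ((1 + κ)(1 + ν)) * detv (B - A) (C - A)`,
which is nonzero for `κ, ν > 0`.
-/

theorem detv_smul_left (a : ℝ) (u v : ℝ × ℝ) : detv (a • u) v = a * detv u v := by
  simp only [detv, Prod.smul_fst, Prod.smul_snd, smul_eq_mul]
  ring

theorem detv_self (v : ℝ × ℝ) : detv v v = 0 := by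
  simp only [detv]
  ring

theorem detv_smul_add_smul (a b c d : ℝ) (u v : ℝ × ℝ) :
    detv (a • u + b • v) (c • u + d • v) = (a * d - b * c) * detv u v := by
  simp only [detv, Prod.fst_add, Prod.snd_add, Prod.smul_fst, Prod.smul_snd, smul_eq_mul]
  ring

theorem eq_of_mem_lineTh_inter {P Q R S X Y : ℝ × ℝ} (hdet : detv (Q - P) (S - R) ≠ 0)
    (hX : X ∈ lineTh P Q ∩ lineTh R S) (hY : Y ∈ lineTh P Q ∩ lineTh R S) : X = Y := by
  obtain ⟨⟨t, rfl⟩, s, hs⟩ := hX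
  obtain ⟨⟨t', rfl⟩, s', hs'⟩ := hY
  have hdiff : (t - t') • (Q - P) = (s - s') • (S - R) := by
    linear_combination (norm := module) hs - hs'
  have hmul : (t - t') * detv (Q - P) (S - R) = 0 := by
    rw [← detv_smul_left, hdiff, detv_smul_left, detv_self, mul_zero]
  rw [sub_eq_zero.mp ((mul_eq_zero.mp hmul).resolve_right hdet)]

theorem detv_sub_parallelogram_cevians {A B C D K N : ℝ × ℝ} {k n : ℝ} (hk : 1 + k ≠ 0)
    (hn : 1 + n ≠ 0) (hpar : D = A + C - B) (hK : K = (1 / (1 + k)) • B + (k / (1 + k)) • C)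
    (hN : N = (1 / (1 + n)) • A + (n / (1 + n)) • B) :
    detv (K - A) (N - D) =
      -(1 + k + n + 2 * k * n) / ((1 + k) * (1 + n)) * detv (B - A) (C - A) := by
  have hKA : K - A = (1 / (1 + k)) • (B - A) + (k / (1 + k)) • (C - A) := by
    subst hK
    ext <;> simp only [Prod.fst_add, Prod.snd_add, Prod.fst_sub, Prod.snd_sub, Prod.smul_fst,
      Prod.smul_snd, smul_eq_mul] <;> field_simp <;> ring
  have hND : N - D = ((1 + 2 * n) / (1 + n)) • (B - A) + (-1 : ℝ) • (C - A) := by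
    subst hN hpar
    ext <;> simp only [Prod.fst_add, Prod.snd_add, Prod.fst_sub, Prod.snd_sub, Prod.smul_fst,
      Prod.smul_snd, smul_eq_mul] <;> field_simp <;> ring
  rw [hKA, hND, detv_smul_add_smul]
  congr 1
  field_simp
  ring

theorem mem_lineTh_inter_parallelogram_cevians {A B C D K N Z : ℝ × ℝ} {k n : ℝ}
    (hk : 0 < k) (hn : 0 < n) (hpar : D = A + C - B)
    (hK : K = (1 / (1 + k)) • B + (k / (1 + k)) • C)
    (hN : N = (1 / (1 + n)) • A + (n / (1 + n)) • B)
    (hZ : Z = (1 / (k + (1 + k + k * n) / n + 1)) •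
        (k • C + ((1 + k + k * n) / n) • A + (1 : ℝ) • B)) :
    Z ∈ lineTh A K ∩ lineTh D N := by
  refine ⟨⟨(1 + k) * n / (1 + k + n + 2 * k * n), ?_⟩,
    (1 + k) * (1 + n) / (1 + k + n + 2 * k * n), ?_⟩
  · subst hZ hK
    ext <;> simp only [Prod.fst_add, Prod.snd_add, Prod.fst_sub, Prod.snd_sub, Prod.smul_fst,
      Prod.smul_snd, smul_eq_mul] <;> field_simp <;> ring
  · subst hZ hN hpar
    ext <;> simp only [Prod.fst_add, Prod.snd_add, Prod.fst_sub, Prod.snd_sub, Prod.smul_fst,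
      Prod.smul_snd, smul_eq_mul] <;> field_simp <;> ring

/-- In a parallelogram ABCD, the lines AK and DN meet in the unique point with
homogeneous barycentric coordinates (κ, (1+κ+κν)/ν, 1) relative to (C, A, B). -/
theorem parallelogram_AK_DN_intersection (A B C D : ℝ × ℝ)
    (hind : detv (B - A) (C - A) ≠ 0) (hpar : D = A + C - B)
    (k n : ℝ) (hk : 0 < k) (hn : 0 < n) (K N Z : ℝ × ℝ)
    (hK : K = (1 / (1 + k)) • B + (k / (1 + k)) • C)
    (hN : N = (1 / (1 + n)) • A + (n / (1 + n)) • B)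
    (hZ : Z = (1 / (k + (1 + k + k * n) / n + 1)) •
        (k • C + ((1 + k + k * n) / n) • A + (1 : ℝ) • B)) :
    Z ∈ lineTh A K ∩ lineTh D N ∧
      ∀ X ∈ lineTh A K ∩ lineTh D N, X = Z := by
  have hZmem := mem_lineTh_inter_parallelogram_cevians hk hn hpar hK hN hZ
  have hdet : detv (K - A) (N - D) ≠ 0 := by
    rw [detv_sub_parallelogram_cevians (by positivity) (by positivity) hpar hK hN]
    exact mul_ne_zero (div_ne_zero (neg_ne_zero.mpr (by positivity)) (by positivity)) hind
  exact ⟨hZmem, fun X hX => eq_of_mem_lineTh_inter hdet hX hZmem⟩
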